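/- arXiv:1501.07106 — 2 statements merged into one kernel-verified Lean document; each statement's English description precedes it below -/
import Mathlib

section
/- Deciding ω-stream planarity of a streamed graph is equivalent to deciding whether the sequence of graphs G_i = (V, {e_j : i ≤ j < i + ω}), for 1 ≤ i ≤ m − ω + 1, admits a simultaneous embedding with fixed edges (SEFE): the streamed graph is ω-stream planar if and only if there exist planar embeddings E_i of G_i such that E_i and E_j agree on G_i ∩ G_j for all i, j. -/
open Set unitInterval

/-- A topological drawing of a set of edges `E` on vertex set `V`:
vertices get distinct points in the plane, each edge a simple curve
connecting the points of its endpoints. -/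
structure Drawing (V : Type*) (E : Set (Sym2 V)) where
  pos : V → ℝ × ℝ
  pos_inj : Function.Injective pos
  curve : Sym2 V → unitInterval → ℝ × ℝ
  curve_cont : ∀ e ∈ E, Continuous (curve e)
  curve_inj : ∀ e ∈ E, Function.Injective (curve e)
  curve_ends : ∀ u v : V, s(u, v) ∈ E →
    (curve s(u, v) 0 = pos u ∧ curve s(u, v) 1 = pos v) ∨
    (curve s(u, v) 0 = pos v ∧ curve s(u, v) 1 = pos u)

/-- Two (distinct) edges cross in a drawing if their curves share a point
interior to both. -/
def Drawing.Cross {V : Type*} {E : Set (Sym2 V)} (D : Drawing V E) (e f : Sym2 V) : Prop :=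
  e ≠ f ∧ ∃ s t : unitInterval, s ≠ 0 ∧ s ≠ 1 ∧ t ≠ 0 ∧ t ≠ 1 ∧ D.curve e s = D.curve f t

/-- A streamed graph (with backbone): a planar backbone edge set `S`,
a stream `e_1, …, e_m` of further edges (the bijection `Ψ` is encoded by
the indexing `stream : Fin m → Sym2 V`, `Ψ(e_i) = i`). -/
structure StreamedGraph (V : Type*) where
  S : Set (Sym2 V)
  m : ℕ
  stream : Fin m → Sym2 V
  stream_inj : Function.Injective stream
  stream_not_backbone : ∀ i, stream i ∉ S
  S_loopless : ∀ e ∈ S, ¬ e.IsDiag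
  stream_loopless : ∀ i, ¬ (stream i).IsDiag

/-- All edges (backbone and stream) of a streamed graph. -/
def StreamedGraph.edges {V : Type*} (G : StreamedGraph V) : Set (Sym2 V) :=
  G.S ∪ Set.range G.stream

/-- `ω`-stream planarity: a drawing of `(V, S ∪ E)` in which two edges cross
only if neither is a backbone edge, and stream edges `e_i`, `e_j` cross only
if `|Ψ(e_i) - Ψ(e_j)| ≥ ω`. -/
def IsStreamPlanar {V : Type*} (G : StreamedGraph V) (ω : ℕ) : Prop :=
  ∃ D : Drawing V G.edges,
    (∀ e ∈ G.S, ∀ f ∈ G.edges, ¬ D.Cross e f) ∧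
    (∀ i j : Fin G.m, D.Cross (G.stream i) (G.stream j) → (ω : ℤ) ≤ |(i : ℤ) - (j : ℤ)|)

/-- A SEFE of a family of graphs (edge sets) on the same vertex set: a single
drawing of the union in which each edge keeps one fixed curve, such that each
individual graph is drawn planarly (i.e. two edges may cross only if no member
of the family contains both). -/
def HasSEFE {V : Type*} {ι : Type*} (fam : ι → Set (Sym2 V)) : Prop :=
  ∃ D : Drawing V (⋃ i, fam i), ∀ i, ∀ e ∈ fam i, ∀ f ∈ fam i, ¬ D.Cross e f

/-- The `i`-th window graph `G_i = (V, {e_j : i ≤ j < i + ω})` (`0`-based). -/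
def windowEdges {V : Type*} (G : StreamedGraph V) (ω : ℕ) (i : ℕ) : Set (Sym2 V) :=
  {e : Sym2 V | ∃ j : Fin G.m, e = G.stream j ∧ i ≤ (j : ℕ) ∧ (j : ℕ) < i + ω}

/-- A streamed graph (no backbone) is `ω`-stream planar iff the
sequence of window graphs `G_i = (V, {e_j : i ≤ j < i + ω})`, for
`1 ≤ i ≤ m − ω + 1`, admits a simultaneous embedding with fixed edges. -/
theorem streamPlanar_iff_sefe {V : Type*} (G : StreamedGraph V) (ω : ℕ)
    (hS : G.S = ∅) (hω : 1 ≤ ω) (hωm : ω ≤ G.m) :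
    IsStreamPlanar G ω ↔
      HasSEFE (fun i : Fin (G.m - ω + 1) => windowEdges G ω (i : ℕ)) := by

  have hU : (⋃ i : Fin (G.m - ω + 1), windowEdges G ω (i : ℕ)) = G.edges := by
    ext e
    simp only [StreamedGraph.edges, hS, Set.empty_union, Set.mem_iUnion, windowEdges,
      Set.mem_setOf_eq, Set.mem_range]
    constructor
    · rintro ⟨i, j, rfl, -, -⟩; exact ⟨j, rfl⟩
    · rintro ⟨j, rfl⟩
      have hj := j.isLt
      refine ⟨⟨min (j : ℕ) (G.m - ω), by omega⟩, j, rfl, ?_, ?_⟩ <;>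
        · simp only [Fin.val_mk]; omega
  constructor
  · rintro ⟨D, -, hcross⟩
    refine ⟨⟨D.pos, D.pos_inj, D.curve, ?_, ?_, ?_⟩, ?_⟩
    · intro e he; exact D.curve_cont e (hU ▸ he)
    · intro e he; exact D.curve_inj e (hU ▸ he)
    · intro u v h; exact D.curve_ends u v (hU ▸ h)
    · rintro i e ⟨a, rfl, ha1, ha2⟩ f ⟨b, rfl, hb1, hb2⟩ hc
      have h := hcross a b hc
      have := abs_cases ((a : ℤ) - (b : ℤ))
      omega
  · rintro ⟨D, hsefe⟩
    refine ⟨⟨D.pos, D.pos_inj, D.curve, ?_, ?_, ?_⟩, ?_, ?_⟩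
    · intro e he; exact D.curve_cont e (hU ▸ he)
    · intro e he; exact D.curve_inj e (hU ▸ he)
    · intro u v h; exact D.curve_ends u v (hU ▸ h)
    · intro e he; rw [hS] at he; exact absurd he (Set.notMem_empty e)
    · intro a b hc
      by_contra hlt
      push_neg at hlt
      have ha := a.isLt
      have hb := b.isLt
      have habs := abs_cases ((a : ℤ) - (b : ℤ))
      have hilt : min (min (a : ℕ) (b : ℕ)) (G.m - ω) < G.m - ω + 1 := by omega
      refine hsefe ⟨_, hilt⟩ _ ⟨a, rfl, ?_, ?_⟩ _ ⟨b, rfl, ?_, ?_⟩ hc <;>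
        · simp only [Fin.val_mk]; omega
end

section
/- If a streamed graph with backbone admits an ω-streamed drawing, then for every planar embedding E of the backbone obtained from that drawing and every two stream edges e_i, e_j assigned to the same face of E with |Ψ(e_i) − Ψ(e_j)| < ω, the endpoints of e_i and e_j do not alternate along the boundary of that face. -/
open Set unitInterval

/-- The point set occupied by a drawing. -/
def Drawing.image {V : Type*} {E : Set (Sym2 V)} (D : Drawing V E) : Set (ℝ × ℝ) :=
  Set.range D.pos ∪ ⋃ e ∈ E, Set.range (D.curve e)

/-- A planar drawing: no two edges cross. -/
def Drawing.IsPlanar {V : Type*} {E : Set (Sym2 V)} (D : Drawing V E) : Prop :=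
  ∀ e ∈ E, ∀ f ∈ E, ¬ D.Cross e f

/-- Two vertices lie on the boundary of a common face of the drawing: a face is
a connected component of the complement of the drawing, and lying on its
boundary means lying in its closure. -/
def Drawing.ShareFace {V : Type*} {E : Set (Sym2 V)} (D : Drawing V E) (u v : V) : Prop :=
  ∃ x ∉ D.image, D.pos u ∈ closure (connectedComponentIn D.imageᶜ x) ∧
    D.pos v ∈ closure (connectedComponentIn D.imageᶜ x)

/-- `C` is a face of (the drawing with image) `K`: a connected component of the
complement of `K`. -/
def IsFaceOf (K C : Set (ℝ × ℝ)) : Prop :=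
  ∃ x ∉ K, C = connectedComponentIn Kᶜ x

/-- The endpoint pairs `(a, b)` and `(c, d)` do not alternate along the
boundary of the face `C`: they can be joined by two disjoint curves whose
interiors run inside `C`. -/
def DisjointlyConnectable (C : Set (ℝ × ℝ)) (a b c d : ℝ × ℝ) : Prop :=
  ∃ γ₁ γ₂ : unitInterval → ℝ × ℝ, Continuous γ₁ ∧ Continuous γ₂ ∧
    γ₁ 0 = a ∧ γ₁ 1 = b ∧ γ₂ 0 = c ∧ γ₂ 1 = d ∧
    (∀ t : unitInterval, t ≠ 0 → t ≠ 1 → γ₁ t ∈ C) ∧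
    (∀ t : unitInterval, t ≠ 0 → t ≠ 1 → γ₂ t ∈ C) ∧
    Disjoint (Set.range γ₁) (Set.range γ₂)

/-- A vertex is isolated in the backbone graph. -/
def IsIsolatedVertex {V : Type*} (G : StreamedGraph V) (v : V) : Prop :=
  ∀ e ∈ G.S, v ∉ e

/-- The part of the plane occupied by the backbone in a drawing of the whole
instance. -/
def backboneImage {V : Type*} (G : StreamedGraph V) (D : Drawing V G.edges) :
    Set (ℝ × ℝ) :=
  Set.range D.pos ∪ ⋃ e ∈ G.S, Set.range (D.curve e)

/-- A `2`-connected graph: connected, and still connected after deleting any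
single vertex. -/
def TwoConnected {V : Type*} (H : SimpleGraph V) : Prop :=
  H.Connected ∧ ∀ v : V, (H.induce {w | w ≠ v}).Connected

/-- Auxiliary: any edge of a drawing admits a parametrization starting at `u`
and ending at `v`, with the same range, whose interior points are interior
points of the original curve. -/
lemma Drawing.exists_param {V : Type*} {E : Set (Sym2 V)} (D : Drawing V E)
    (u v : V) (h : s(u, v) ∈ E) :
    ∃ γ : unitInterval → ℝ × ℝ, Continuous γ ∧ γ 0 = D.pos u ∧ γ 1 = D.pos v ∧
      Set.range γ = Set.range (D.curve s(u, v)) ∧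
      ∀ t : unitInterval, t ≠ 0 → t ≠ 1 →
        ∃ s : unitInterval, s ≠ 0 ∧ s ≠ 1 ∧ γ t = D.curve s(u, v) s := by
  have hinv : Function.Involutive (unitInterval.symm) := unitInterval.symm_symm
  rcases D.curve_ends u v h with ⟨h0, h1⟩ | ⟨h0, h1⟩
  · exact ⟨D.curve s(u, v), D.curve_cont _ h, h0, h1, rfl,
      fun t ht0 ht1 => ⟨t, ht0, ht1, rfl⟩⟩
  · refine ⟨D.curve s(u, v) ∘ unitInterval.symm,
      (D.curve_cont _ h).comp unitInterval.continuous_symm, ?_, ?_,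
      hinv.surjective.range_comp _, ?_⟩
    · simpa using h1
    · simpa using h0
    · intro t ht0 ht1
      refine ⟨unitInterval.symm t, ?_, ?_, rfl⟩
      · intro hs
        exact ht1 (hinv.injective (by simpa using hs))
      · intro hs
        exact ht0 (hinv.injective (by simpa using hs))

/-- If a streamed graph with (2-connected) backbone admits an
`ω`-streamed drawing, then in the planar embedding of the backbone obtained
from that drawing, any two stream edges `e_i`, `e_j` with
`|Ψ(e_i) − Ψ(e_j)| < ω` drawn inside the same face and sharing no endpoint have
non-alternating endpoints along the boundary of that face (their endpoint pairs
can be joined by disjoint curves inside the face). -/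
theorem streamedDrawing_no_alternation {V : Type*} (G : StreamedGraph V) (ω : ℕ)
    (h2conn : TwoConnected (SimpleGraph.fromEdgeSet G.S))
    (D : Drawing V G.edges)
    (hback : ∀ e ∈ G.S, ∀ f ∈ G.edges, ¬ D.Cross e f)
    (hwin : ∀ i j : Fin G.m, D.Cross (G.stream i) (G.stream j) →
      (ω : ℤ) ≤ |(i : ℤ) - (j : ℤ)|) :
    ∀ i j : Fin G.m, i ≠ j → |(i : ℤ) - (j : ℤ)| < (ω : ℤ) →
      (∀ x : V, x ∈ G.stream i → x ∉ G.stream j) →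
      ∀ C : Set (ℝ × ℝ), IsFaceOf (backboneImage G D) C →
        (∀ t : unitInterval, t ≠ 0 → t ≠ 1 → D.curve (G.stream i) t ∈ C) →
        (∀ t : unitInterval, t ≠ 0 → t ≠ 1 → D.curve (G.stream j) t ∈ C) →
        ∀ u v u' v' : V, G.stream i = s(u, v) → G.stream j = s(u', v') →
          DisjointlyConnectable C (D.pos u) (D.pos v) (D.pos u') (D.pos v') := by
  intro i j hij hlt hx C hface hCi hCj u v u' v' hei hej
  obtain ⟨x, hxK, rfl⟩ := hface
  have hCsub : connectedComponentIn (backboneImage G D)ᶜ x ⊆ (backboneImage G D)ᶜ :=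
    connectedComponentIn_subset _ _
  have hiE : G.stream i ∈ G.edges := Or.inr ⟨i, rfl⟩
  have hjE : G.stream j ∈ G.edges := Or.inr ⟨j, rfl⟩
  obtain ⟨γ₁, hc1, h10, h11, hr1, hint1⟩ := D.exists_param u v (hei ▸ hiE)
  obtain ⟨γ₂, hc2, h20, h21, hr2, hint2⟩ := D.exists_param u' v' (hej ▸ hjE)
  have endi : ∀ s : unitInterval, s = 0 ∨ s = 1 →
      D.curve (G.stream i) s = D.pos u ∨ D.curve (G.stream i) s = D.pos v := by
    intro s hs
    rw [hei]
    rcases D.curve_ends u v (hei ▸ hiE) with ⟨e0, e1⟩ | ⟨e0, e1⟩ <;>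
      rcases hs with rfl | rfl <;> simp [e0, e1]
  have endj : ∀ s : unitInterval, s = 0 ∨ s = 1 →
      D.curve (G.stream j) s = D.pos u' ∨ D.curve (G.stream j) s = D.pos v' := by
    intro s hs
    rw [hej]
    rcases D.curve_ends u' v' (hej ▸ hjE) with ⟨e0, e1⟩ | ⟨e0, e1⟩ <;>
      rcases hs with rfl | rfl <;> simp [e0, e1]
  have hposK : ∀ w : V, D.pos w ∈ backboneImage G D := fun w => Or.inl ⟨w, rfl⟩
  refine ⟨γ₁, γ₂, hc1, hc2, h10, h11, h20, h21, ?_, ?_, ?_⟩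
  · intro t ht0 ht1
    obtain ⟨s, hs0, hs1, heq⟩ := hint1 t ht0 ht1
    rw [heq, ← hei]
    exact hCi s hs0 hs1
  · intro t ht0 ht1
    obtain ⟨s, hs0, hs1, heq⟩ := hint2 t ht0 ht1
    rw [heq, ← hej]
    exact hCj s hs0 hs1
  · rw [hr1, hr2, ← hei, ← hej, Set.disjoint_left]
    rintro p ⟨s, rfl⟩ ⟨t, hpt⟩
    by_cases hs : s = 0 ∨ s = 1
    · by_cases ht : t = 0 ∨ t = 1
      · -- endpoint meets endpoint: shared vertex, contradiction with hx
        have h1 := endi s hs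
        have h2 := endj t ht
        have hui : u ∈ G.stream i := by rw [hei]; exact Sym2.mem_mk_left u v
        have hvi : v ∈ G.stream i := by rw [hei]; exact Sym2.mem_mk_right u v
        have huj : u' ∈ G.stream j := by rw [hej]; exact Sym2.mem_mk_left u' v'
        have hvj : v' ∈ G.stream j := by rw [hej]; exact Sym2.mem_mk_right u' v'
        rcases h1 with h1 | h1 <;> rcases h2 with h2 | h2 <;>
          rw [h1] at hpt <;> rw [h2] at hpt
        · exact hx u hui (D.pos_inj hpt ▸ huj)
        · exact hx u hui (D.pos_inj hpt ▸ hvj)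
        · exact hx v hvi (D.pos_inj hpt ▸ huj)
        · exact hx v hvi (D.pos_inj hpt ▸ hvj)
      · -- endpoint of i (a vertex, in backbone image) lies in the face: absurd
        push_neg at ht
        have hmem : D.curve (G.stream j) t ∈ connectedComponentIn (backboneImage G D)ᶜ x :=
          hCj t ht.1 ht.2
        have hK : D.curve (G.stream i) s ∈ backboneImage G D := by
          rcases endi s hs with h | h <;> rw [h] <;> exact hposK _
        rw [hpt] at hmem
        exact hCsub hmem hK
    · by_cases ht : t = 0 ∨ t = 1
      · push_neg at hs
        have hmem : D.curve (G.stream i) s ∈ connectedComponentIn (backboneImage G D)ᶜ x :=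
          hCi s hs.1 hs.2
        have hK : D.curve (G.stream j) t ∈ backboneImage G D := by
          rcases endj t ht with h | h <;> rw [h] <;> exact hposK _
        rw [← hpt] at hmem
        exact hCsub hmem hK
      · -- interior meets interior: a crossing, contradicting the window bound
        push_neg at hs
        push_neg at ht
        have hne : G.stream i ≠ G.stream j := fun h => hij (G.stream_inj h)
        have hcross : D.Cross (G.stream i) (G.stream j) :=
          ⟨hne, s, t, hs.1, hs.2, ht.1, ht.2, hpt.symm⟩
        exact absurd (hwin i j hcross) (not_le.mpr hlt)
end
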